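/- Let a > 1/4 be a real number and for n ≥ 0 define b_n = ((2a)_n (1−2a)_n)/((4a)_n · n!), where (α)_n = α(α+1)⋯(α+n−1) is the rising factorial (assume 4a is not a nonpositive integer so that b_n is defined), and let F(x) = Σ_{n=0}^∞ b_n xⁿ for |x| < 1. Then F is infinitely differentiable on (−1, 1), and (1−x) F'(x) → 0 and (1−x)² F''(x) → 0 as x → 1⁻. In particular, the quantities (1−x)|F'(x)| and (1−x)²|F''(x)| are uniformly bounded for 0 ≤ x < 1. -/

import Mathlib

open scoped Nat
open Filter FormalMultilinearSeries
open scoped ENNReal NNReal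

set_option maxHeartbeats 1000000

private lemma psum_summable_aux {x : ℝ} (K : ℝ) (hx0 : 0 ≤ x) (hx1 : x < 1) :
    Summable (fun n : ℕ => K * ((n : ℝ) + 1) * x ^ n) := by
  have h1 : Summable (fun n : ℕ => (n : ℝ) ^ 1 * x ^ n) :=
    summable_pow_mul_geometric_of_norm_lt_one 1 (by rwa [Real.norm_eq_abs, abs_of_nonneg hx0])
  have h2 : Summable (fun n : ℕ => x ^ n) := summable_geometric_of_lt_one hx0 hx1
  have := ((h1.add h2).mul_left K)
  apply this.congr
  intro n; ring

private lemma psum_hasFPowerSeries (c : ℕ → ℝ) (C : ℝ) (hc : ∀ n, |c n| ≤ C * ((n : ℝ) + 1)) :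
    HasFPowerSeriesOnBall (fun x : ℝ => ∑' n : ℕ, c n * x ^ n) (ofScalars ℝ c) 0 1 := by
  have hrad : (1 : ℝ≥0∞) ≤ (ofScalars ℝ c).radius := by
    apply ENNReal.le_of_forall_nnreal_lt
    intro r hr
    apply le_radius_of_summable
    have hr1 : (r : ℝ) < 1 := by exact_mod_cast hr
    apply Summable.of_nonneg_of_le
      (fun n => mul_nonneg (norm_nonneg _) (pow_nonneg r.coe_nonneg n))
      (fun n => ?_) (psum_summable_aux C r.coe_nonneg hr1)
    apply mul_le_mul_of_nonneg_right _ (pow_nonneg r.coe_nonneg n)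
    rw [ofScalars_norm]
    exact hc n
  have h0 : (0 : ℝ≥0∞) < (ofScalars ℝ c).radius := lt_of_lt_of_le one_pos hrad
  have hball := ((ofScalars ℝ c).hasFPowerSeriesOnBall h0).mono one_pos hrad
  have heq : (fun x : ℝ => ∑' n : ℕ, c n * x ^ n) = (ofScalars ℝ c).sum := by
    funext x
    rw [FormalMultilinearSeries.sum]
    exact tsum_congr fun n => by rw [ofScalars_apply_eq, smul_eq_mul]
  rw [heq]
  exact hball

private lemma derivSeries_ofScalars_apply (c : ℕ → ℝ) (n : ℕ) (x : ℝ) :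
    ((ofScalars ℝ c).derivSeries n (fun _ => x)) 1 = (((n : ℝ) + 1) * c (n + 1)) * x ^ n := by
  rcases eq_or_ne x 0 with rfl | hx
  · rcases n with _ | m
    · have e : (fun _ : Fin 0 => (0:ℝ)) = (fun _ : Fin 0 => (1:ℝ)) := by
        funext i; exact i.elim0
      rw [e]
      have h1 := (ofScalars ℝ c).derivSeries_apply_diag 0 (1 : ℝ)
      rw [ofScalars_apply_eq] at h1
      simpa using h1
    · have h : ((ofScalars ℝ c).derivSeries (m+1)) (fun _ => (0:ℝ)) = 0 :=
        ContinuousMultilinearMap.map_coord_zero _ (0 : Fin (m+1)) rfl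
      rw [h]
      simp
  · have h1 := (ofScalars ℝ c).derivSeries_apply_diag n x
    rw [ofScalars_apply_eq] at h1
    have h2 := ((ofScalars ℝ c).derivSeries n (fun _ => x)).map_smul x (1:ℝ)
    simp only [smul_eq_mul, mul_one] at h2
    rw [h2] at h1
    apply mul_left_cancel₀ hx
    rw [h1]
    push_cast [smul_eq_mul]
    ring

private lemma psum_deriv (c : ℕ → ℝ) (C : ℝ) (hc : ∀ n, |c n| ≤ C * ((n : ℝ) + 1))
    {x : ℝ} (hx : |x| < 1) :
    HasSum (fun n : ℕ => (((n : ℝ) + 1) * c (n + 1)) * x ^ n)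
      (deriv (fun y : ℝ => ∑' n : ℕ, c n * y ^ n) x) := by
  have hp := (psum_hasFPowerSeries c C hc).fderiv
  have hxball : x ∈ Metric.eball (0:ℝ) 1 := by
    rw [EMetric.mem_ball, edist_dist, Real.dist_eq, sub_zero]
    exact_mod_cast ENNReal.ofReal_lt_one.2 hx
  have hs := hp.hasSum hxball
  have h2 := hs.mapL (ContinuousLinearMap.apply ℝ ℝ (1:ℝ))
  simp only [ContinuousLinearMap.apply_apply, derivSeries_ofScalars_apply, zero_add,
    fderiv_apply_one_eq_deriv] at h2
  exact h2

private lemma hasSum_weight {x : ℝ} (hx0 : 0 ≤ x) (hx1 : x < 1) :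
    HasSum (fun n : ℕ => ((n : ℝ) + 1) * x ^ n) (1 / (1 - x) ^ 2) := by
  have hx : ‖x‖ < 1 := by rwa [Real.norm_eq_abs, abs_of_nonneg hx0]
  have h1 := hasSum_coe_mul_geometric_of_norm_lt_one hx
  have h2 := hasSum_geometric_of_lt_one hx0 hx1
  have h3 := h1.add h2
  have hne : (1 : ℝ) - x ≠ 0 := by linarith
  have : x / (1 - x) ^ 2 + (1 - x)⁻¹ = 1 / (1 - x) ^ 2 := by field_simp; ring
  rw [this] at h3
  exact h3.congr_fun fun n => by ring

private lemma summable_of_le_weight {c : ℕ → ℝ} {K x : ℝ} (h0 : ∀ n, 0 ≤ c n)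
    (hK : ∀ n, c n ≤ K * ((n : ℝ) + 1)) (hx0 : 0 ≤ x) (hx1 : x < 1) :
    Summable (fun n : ℕ => c n * x ^ n) :=
  Summable.of_nonneg_of_le (fun n => mul_nonneg (h0 n) (pow_nonneg hx0 n))
    (fun n => mul_le_mul_of_nonneg_right (hK n) (pow_nonneg hx0 n))
    (psum_summable_aux K hx0 hx1)

/-- bound: (1-x)^2 * ∑ c_n x^n ≤ K when c_n ≤ K (n+1) -/
private lemma bound_two {c : ℕ → ℝ} {K x : ℝ} (h0 : ∀ n, 0 ≤ c n)
    (hK : ∀ n, c n ≤ K * ((n : ℝ) + 1)) (hx0 : 0 ≤ x) (hx1 : x < 1) :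
    (1 - x) ^ 2 * ∑' n : ℕ, c n * x ^ n ≤ K := by
  have hw := hasSum_weight hx0 hx1
  have hs := summable_of_le_weight h0 hK hx0 hx1
  have hT : ∑' n : ℕ, c n * x ^ n ≤ K * (1 / (1 - x) ^ 2) := by
    have := Summable.tsum_le_tsum (f := fun n : ℕ => c n * x ^ n)
      (g := fun n : ℕ => K * (((n : ℝ) + 1) * x ^ n))
      (fun n => by
        simp only [← mul_assoc]
        exact mul_le_mul_of_nonneg_right (hK n) (pow_nonneg hx0 n)) hs ((hw.summable).mul_left K)
    calc ∑' n : ℕ, c n * x ^ n ≤ ∑' n : ℕ, K * (((n : ℝ) + 1) * x ^ n) := this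
      _ = K * (1 / (1 - x) ^ 2) := by rw [tsum_mul_left, hw.tsum_eq]
  have hx1' : (0:ℝ) < 1 - x := by linarith
  have hpos : (0:ℝ) < (1 - x) ^ 2 := pow_pos hx1' 2
  calc (1 - x) ^ 2 * ∑' n : ℕ, c n * x ^ n ≤ (1 - x) ^ 2 * (K * (1 / (1 - x) ^ 2)) :=
        mul_le_mul_of_nonneg_left hT hpos.le
    _ = K := by field_simp

/-- bound: (1-x) * ∑ c_n x^n ≤ K when c_n ≤ K -/
private lemma bound_one {c : ℕ → ℝ} {K x : ℝ} (h0 : ∀ n, 0 ≤ c n)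
    (hK : ∀ n, c n ≤ K) (hx0 : 0 ≤ x) (hx1 : x < 1) :
    (1 - x) * ∑' n : ℕ, c n * x ^ n ≤ K := by
  have hg : Summable (fun n : ℕ => x ^ n) := summable_geometric_of_lt_one hx0 hx1
  have hK0 : 0 ≤ K := le_trans (h0 0) (hK 0)
  have hs : Summable (fun n : ℕ => c n * x ^ n) :=
    summable_of_le_weight h0 (fun n => by nlinarith [hK n, Nat.cast_nonneg (α := ℝ) n]) hx0 hx1
  have hT : ∑' n : ℕ, c n * x ^ n ≤ K * (1 - x)⁻¹ := by
    calc ∑' n : ℕ, c n * x ^ n ≤ ∑' n : ℕ, K * x ^ n :=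
          Summable.tsum_le_tsum (fun n => mul_le_mul_of_nonneg_right (hK n) (pow_nonneg hx0 n)) hs
            (hg.mul_left K)
      _ = K * (1 - x)⁻¹ := by rw [tsum_mul_left, tsum_geometric_of_lt_one hx0 hx1]
  have hpos : (0:ℝ) < 1 - x := by linarith
  calc (1 - x) * ∑' n : ℕ, c n * x ^ n ≤ (1 - x) * (K * (1 - x)⁻¹) :=
        mul_le_mul_of_nonneg_left hT hpos.le
    _ = K := by field_simp

/-- If `c n → 0`, `c ≥ 0`, then `(1-x) ∑ c_n x^n → 0` as `x → 1⁻`. -/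
private lemma tendsto_one {c : ℕ → ℝ} (h0 : ∀ n, 0 ≤ c n)
    (hc : Tendsto c atTop (nhds 0)) :
    Tendsto (fun x : ℝ => (1 - x) * ∑' n : ℕ, c n * x ^ n)
      (nhdsWithin 1 (Set.Iio 1)) (nhds 0) := by
  obtain ⟨K, hKmem⟩ := hc.bddAbove_range
  have hK : ∀ n, c n ≤ K := fun n => hKmem ⟨n, rfl⟩
  rw [Metric.tendsto_nhdsWithin_nhds]
  intro ε hε
  obtain ⟨N, hN⟩ := (hc.eventually (gt_mem_nhds (half_pos hε))).exists_forall_of_atTop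
  set S : ℝ := ∑ i ∈ Finset.range N, c i with hS
  have hS0 : 0 ≤ S := Finset.sum_nonneg fun i _ => h0 i
  refine ⟨min (1/2) (ε / (2 * (S + 1))), by positivity, ?_⟩
  intro x hx hdist
  rw [Real.dist_eq] at hdist
  have hx1 : x < 1 := hx
  have hd1 : 1 - x < min (1/2) (ε / (2 * (S + 1))) := by
    rw [abs_of_neg (by linarith : x - 1 < 0)] at hdist; linarith
  have hx0 : 0 ≤ x := by
    have := lt_of_lt_of_le hd1 (min_le_left _ _); linarith
  have hxm : 1 - x < ε / (2 * (S + 1)) := lt_of_lt_of_le hd1 (min_le_right _ _)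
  have hsum : Summable (fun n : ℕ => c n * x ^ n) :=
    summable_of_le_weight (K := max K 0) h0
      (fun n => by
        nlinarith [hK n, Nat.cast_nonneg (α := ℝ) n, le_max_left K 0, le_max_right K 0]) hx0 hx1
  have hsplit := Summable.sum_add_tsum_nat_add (f := fun n : ℕ => c n * x ^ n) N hsum
  have hgeom : Summable (fun n : ℕ => x ^ n) := summable_geometric_of_lt_one hx0 hx1
  have htail : (∑' n : ℕ, c (n + N) * x ^ (n + N)) ≤ ε / 2 * (1 - x)⁻¹ := by
    calc (∑' n : ℕ, c (n + N) * x ^ (n + N)) ≤ ∑' n : ℕ, ε / 2 * x ^ n := by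
          have hs1 : Summable (fun n : ℕ => c (n + N) * x ^ (n + N)) :=
            (summable_nat_add_iff (f := fun n : ℕ => c n * x ^ n) N).2 hsum
          refine Summable.tsum_le_tsum (fun n => ?_) hs1 (hgeom.mul_left _)
          have h1 : c (n + N) ≤ ε / 2 := (hN (n + N) (Nat.le_add_left N n)).le
          have h2 : x ^ (n + N) ≤ x ^ n :=
            pow_le_pow_of_le_one hx0 hx1.le (Nat.le_add_right n N)
          exact mul_le_mul h1 h2 (pow_nonneg hx0 _) (by linarith [h0 (n + N)])
      _ = ε / 2 * (1 - x)⁻¹ := by rw [tsum_mul_left, tsum_geometric_of_lt_one hx0 hx1]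
  have hhead : (∑ i ∈ Finset.range N, c i * x ^ i) ≤ S := by
    apply Finset.sum_le_sum
    intro i _
    nlinarith [pow_le_one₀ hx0 hx1.le (n := i), h0 i, pow_nonneg hx0 i]
  have hTnn : 0 ≤ ∑' n : ℕ, c n * x ^ n :=
    tsum_nonneg fun n => mul_nonneg (h0 n) (pow_nonneg hx0 n)
  have hxx : (0:ℝ) < 1 - x := by linarith
  rw [Real.dist_eq, sub_zero, abs_of_nonneg (mul_nonneg hxx.le hTnn)]
  have hbound : (1 - x) * ∑' n : ℕ, c n * x ^ n ≤ (1 - x) * S + ε / 2 := by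
    have : ∑' n : ℕ, c n * x ^ n ≤ S + ε / 2 * (1 - x)⁻¹ := by
      rw [← hsplit]; exact add_le_add hhead htail
    have h2 := mul_le_mul_of_nonneg_left this hxx.le
    have h3 : (1 - x) * (S + ε / 2 * (1 - x)⁻¹) = (1 - x) * S + ε / 2 := by
      field_simp
    linarith [h2, h3 ▸ h2]
  have hfin : (1 - x) * S < ε / 2 := by
    calc (1 - x) * S ≤ (1 - x) * (S + 1) := by nlinarith
      _ = (S + 1) * (1 - x) := by ring
      _ < (S + 1) * (ε / (2 * (S + 1))) := by nlinarith
      _ = ε / 2 := by field_simp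
  linarith

/-- If `c n / (n+1) → 0`, `c ≥ 0`, then `(1-x)² ∑ c_n x^n → 0` as `x → 1⁻`. -/
private lemma tendsto_two {c : ℕ → ℝ} (h0 : ∀ n, 0 ≤ c n)
    (hc : Tendsto (fun n : ℕ => c n / ((n : ℝ) + 1)) atTop (nhds 0)) :
    Tendsto (fun x : ℝ => (1 - x) ^ 2 * ∑' n : ℕ, c n * x ^ n)
      (nhdsWithin 1 (Set.Iio 1)) (nhds 0) := by
  obtain ⟨K, hKmem⟩ := hc.bddAbove_range
  have hK : ∀ n, c n ≤ K * ((n : ℝ) + 1) := by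
    intro n
    have h1 : c n / ((n : ℝ) + 1) ≤ K := hKmem ⟨n, rfl⟩
    have h2 : (0:ℝ) < (n : ℝ) + 1 := by positivity
    calc c n = c n / ((n : ℝ) + 1) * ((n : ℝ) + 1) := by field_simp
      _ ≤ K * ((n : ℝ) + 1) := mul_le_mul_of_nonneg_right h1 h2.le
  rw [Metric.tendsto_nhdsWithin_nhds]
  intro ε hε
  obtain ⟨N, hN⟩ := (hc.eventually (gt_mem_nhds (half_pos hε))).exists_forall_of_atTop
  set S : ℝ := ∑ i ∈ Finset.range N, c i with hS
  have hS0 : 0 ≤ S := Finset.sum_nonneg fun i _ => h0 i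
  refine ⟨min (1/2) (ε / (2 * (S + 1))), by positivity, ?_⟩
  intro x hx hdist
  rw [Real.dist_eq] at hdist
  have hx1 : x < 1 := hx
  have hd1 : 1 - x < min (1/2) (ε / (2 * (S + 1))) := by
    rw [abs_of_neg (by linarith : x - 1 < 0)] at hdist; linarith
  have hx0 : 0 ≤ x := by
    have := lt_of_lt_of_le hd1 (min_le_left _ _); linarith
  have hxm : 1 - x < ε / (2 * (S + 1)) := lt_of_lt_of_le hd1 (min_le_right _ _)
  have hxx : (0:ℝ) < 1 - x := by linarith
  have hsum : Summable (fun n : ℕ => c n * x ^ n) := summable_of_le_weight h0 hK hx0 hx1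
  have hsplit := Summable.sum_add_tsum_nat_add (f := fun n : ℕ => c n * x ^ n) N hsum
  have hw := hasSum_weight hx0 hx1
  have hwsum : Summable (fun n : ℕ => ((n : ℝ) + 1) * x ^ n) := hw.summable
  have hwtail_le : (∑' n : ℕ, (((n + N : ℕ) : ℝ) + 1) * x ^ (n + N)) ≤ 1 / (1 - x) ^ 2 := by
    have h1 := Summable.sum_add_tsum_nat_add (f := fun n : ℕ => ((n : ℝ) + 1) * x ^ n) N hwsum
    have h2 : 0 ≤ ∑ i ∈ Finset.range N, (((i : ℕ) : ℝ) + 1) * x ^ i :=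
      Finset.sum_nonneg fun i _ => mul_nonneg (by positivity) (pow_nonneg hx0 i)
    rw [hw.tsum_eq] at h1
    linarith
  have htail : (∑' n : ℕ, c (n + N) * x ^ (n + N)) ≤ ε / 2 * (1 / (1 - x) ^ 2) := by
    calc (∑' n : ℕ, c (n + N) * x ^ (n + N))
        ≤ ∑' n : ℕ, ε / 2 * ((((n + N : ℕ) : ℝ) + 1) * x ^ (n + N)) := by
          have hs1 : Summable (fun n : ℕ => c (n + N) * x ^ (n + N)) :=
            (summable_nat_add_iff (f := fun n : ℕ => c n * x ^ n) N).2 hsum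
          have hs2 : Summable (fun n : ℕ => (((n + N : ℕ) : ℝ) + 1) * x ^ (n + N)) :=
            (summable_nat_add_iff (f := fun n : ℕ => ((n : ℝ) + 1) * x ^ n) N).2 hwsum
          refine Summable.tsum_le_tsum (fun n => ?_) hs1 (hs2.mul_left _)
          have h1 : c (n + N) ≤ ε / 2 * (((n + N : ℕ) : ℝ) + 1) := by
            have := hN (n + N) (Nat.le_add_left N n)
            have hp : (0:ℝ) < ((n + N : ℕ) : ℝ) + 1 := by positivity
            rw [div_lt_iff₀ hp] at this
            linarith
          have h2 : (0:ℝ) ≤ x ^ (n + N) := pow_nonneg hx0 _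
          calc c (n + N) * x ^ (n + N)
              ≤ ε / 2 * (((n + N : ℕ) : ℝ) + 1) * x ^ (n + N) :=
                mul_le_mul_of_nonneg_right h1 h2
            _ = ε / 2 * ((((n + N : ℕ) : ℝ) + 1) * x ^ (n + N)) := by ring
      _ = ε / 2 * ∑' n : ℕ, (((n + N : ℕ) : ℝ) + 1) * x ^ (n + N) := tsum_mul_left
      _ ≤ ε / 2 * (1 / (1 - x) ^ 2) :=
          mul_le_mul_of_nonneg_left hwtail_le (by linarith)
  have hhead : (∑ i ∈ Finset.range N, c i * x ^ i) ≤ S := by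
    apply Finset.sum_le_sum
    intro i _
    nlinarith [pow_le_one₀ hx0 hx1.le (n := i), h0 i, pow_nonneg hx0 i]
  have hTnn : 0 ≤ ∑' n : ℕ, c n * x ^ n :=
    tsum_nonneg fun n => mul_nonneg (h0 n) (pow_nonneg hx0 n)
  have hsq : (0:ℝ) < (1 - x) ^ 2 := pow_pos hxx 2
  rw [Real.dist_eq, sub_zero, abs_of_nonneg (mul_nonneg hsq.le hTnn)]
  have hT : ∑' n : ℕ, c n * x ^ n ≤ S + ε / 2 * (1 / (1 - x) ^ 2) := by
    rw [← hsplit]; exact add_le_add hhead htail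
  have hbound : (1 - x) ^ 2 * ∑' n : ℕ, c n * x ^ n ≤ (1 - x) ^ 2 * S + ε / 2 := by
    have h2 := mul_le_mul_of_nonneg_left hT hsq.le
    have h3 : (1 - x) ^ 2 * (S + ε / 2 * (1 / (1 - x) ^ 2)) = (1 - x) ^ 2 * S + ε / 2 := by
      field_simp
    linarith [h3 ▸ h2]
  have hfin : (1 - x) ^ 2 * S < ε / 2 := by
    have hle1 : (1 - x) ^ 2 ≤ 1 - x := by nlinarith [lt_of_lt_of_le hd1 (min_le_left _ _)]
    calc (1 - x) ^ 2 * S ≤ (1 - x) * (S + 1) := by nlinarith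
      _ = (S + 1) * (1 - x) := by ring
      _ < (S + 1) * (ε / (2 * (S + 1))) := by
          apply mul_lt_mul_of_pos_left hxm (by linarith)
      _ = ε / 2 := by field_simp
  linarith

private lemma coeff_decay (a : ℝ) (ha : 1 / 4 < a) (b : ℕ → ℝ)
    (hb : ∀ n : ℕ, b n =
      ((ascPochhammer ℝ n).eval (2 * a) * (ascPochhammer ℝ n).eval (1 - 2 * a)) /
        ((ascPochhammer ℝ n).eval (4 * a) * (n ! : ℝ))) :
    Tendsto (fun n : ℕ => (n : ℝ) * |b n|) atTop (nhds 0) := by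
  have ha4 : (1 : ℝ) < 4 * a := by linarith
  -- positivity of the (4a)_n
  have hposP : ∀ n : ℕ, 0 < (ascPochhammer ℝ n).eval (4 * a) := by
    intro n
    induction n with
    | zero => simp [ascPochhammer_zero]
    | succ n ih =>
      rw [ascPochhammer_succ_right]
      simp only [Polynomial.eval_mul, Polynomial.eval_add, Polynomial.eval_X,
        Polynomial.eval_natCast]
      have : (0:ℝ) < 4 * a + n := by
        have := Nat.cast_nonneg (α := ℝ) n; linarith
      exact mul_pos ih this
  -- the recurrence
  have key : ∀ n : ℕ, b (n + 1) * ((4 * a + n) * ((n : ℝ) + 1)) =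
      b n * ((2 * a + n) * (1 - 2 * a + n)) := by
    intro n
    have h1 := hb n
    have h2 := hb (n + 1)
    rw [ascPochhammer_succ_right] at h2
    simp only [Polynomial.eval_mul, Polynomial.eval_add, Polynomial.eval_X,
      Polynomial.eval_natCast] at h2
    have hfac : ((n + 1)! : ℝ) = (n ! : ℝ) * ((n : ℝ) + 1) := by
      push_cast [Nat.factorial_succ]; ring
    rw [hfac] at h2
    have hC : (ascPochhammer ℝ n).eval (4 * a) ≠ 0 := (hposP n).ne'
    have hfn : (n ! : ℝ) ≠ 0 := by positivity
    have h4an : 4 * a + (n:ℝ) ≠ 0 := by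
      have := Nat.cast_nonneg (α := ℝ) n; intro h; linarith
    have hn1 : ((n:ℝ) + 1) ≠ 0 := by positivity
    rw [h2, h1]
    field_simp
  set s : ℝ := (1 + 4 * a) / 2 with hs_def
  have hs1 : 1 < s := by rw [hs_def]; linarith
  have hs4 : s < 4 * a := by rw [hs_def]; linarith
  -- Bernoulli
  have bern : ∀ n : ℕ, 1 - s / ((n : ℝ) + 1) ≤ ((n : ℝ) / ((n : ℝ) + 1)) ^ s := by
    intro n
    have hn1 : (0:ℝ) < (n : ℝ) + 1 := by positivity
    have h1 : -1 ≤ -(1 / ((n : ℝ) + 1)) := by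
      rw [neg_le_neg_iff]
      rw [div_le_one hn1]
      linarith [Nat.cast_nonneg (α := ℝ) n]
    have := one_add_mul_self_le_rpow_one_add h1 hs1.le
    have he : (1 : ℝ) + -(1 / ((n : ℝ) + 1)) = (n : ℝ) / ((n : ℝ) + 1) := by
      field_simp
      ring
    rw [he] at this
    calc 1 - s / ((n : ℝ) + 1) = 1 + s * -(1 / ((n : ℝ) + 1)) := by ring
      _ ≤ ((n : ℝ) / ((n : ℝ) + 1)) ^ s := this
  -- choose the threshold
  obtain ⟨N, hN⟩ := exists_nat_ge (max (2 * a) (4 * a * s / (4 * a - s)) + 1)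
  have hNa : 2 * a ≤ (N : ℝ) := by
    have := le_max_left (2 * a) (4 * a * s / (4 * a - s)); linarith
  have hNs : 4 * a * s / (4 * a - s) ≤ (N : ℝ) := by
    have := le_max_right (2 * a) (4 * a * s / (4 * a - s)); linarith
  -- u is decreasing from N on
  set u : ℕ → ℝ := fun n => |b n| * (n : ℝ) ^ s with hu_def
  have hstep : ∀ n : ℕ, N ≤ n → u (n + 1) ≤ u n := by
    intro n hn
    have hnN : (N : ℝ) ≤ (n : ℝ) := by exact_mod_cast hn
    have hn0 : (0:ℝ) < (n : ℝ) := by linarith [hNa, ha]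
    have hn1 : (0:ℝ) < (n : ℝ) + 1 := by linarith
    have hfac1 : (0:ℝ) ≤ 2 * a + n := by linarith
    have hfac2 : (0:ℝ) ≤ 1 - 2 * a + n := by linarith
    have hfac3 : (0:ℝ) < 4 * a + n := by linarith
    -- |key|
    have key2 : |b (n + 1)| * ((4 * a + n) * ((n : ℝ) + 1)) =
        |b n| * ((2 * a + n) * (1 - 2 * a + n)) := by
      have h := congrArg abs (key n)
      simp only [abs_mul] at h
      rwa [abs_of_pos hfac3, abs_of_pos hn1, abs_of_nonneg hfac1, abs_of_nonneg hfac2] at h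
    -- the polynomial inequality
    have poly : (2 * a + n) * (1 - 2 * a + n) * ((n : ℝ) + 1) ^ s ≤
        (4 * a + n) * ((n : ℝ) + 1) * (n : ℝ) ^ s := by
      have hrw : (n : ℝ) ^ s = ((n : ℝ) / ((n : ℝ) + 1)) ^ s * ((n : ℝ) + 1) ^ s := by
        rw [← Real.mul_rpow (by positivity) (by positivity)]
        congr 1
        field_simp
      rw [hrw]
      have hpow : (0:ℝ) < ((n : ℝ) + 1) ^ s := Real.rpow_pos_of_pos hn1 _
      have hineq : (2 * a + n) * (1 - 2 * a + n) ≤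
          (4 * a + n) * ((n : ℝ) + 1) * (1 - s / ((n : ℝ) + 1)) := by
        have he : (4 * a + (n:ℝ)) * ((n : ℝ) + 1) * (1 - s / ((n : ℝ) + 1)) =
            (4 * a + n) * ((n : ℝ) + 1 - s) := by
          field_simp
        rw [he]
        have hds : 0 < 4 * a - s := by linarith
        have hNs' : 4 * a * s ≤ (n : ℝ) * (4 * a - s) := by
          rw [div_le_iff₀ hds] at hNs
          nlinarith
        nlinarith
      calc (2 * a + n) * (1 - 2 * a + n) * ((n : ℝ) + 1) ^ s
          ≤ (4 * a + n) * ((n : ℝ) + 1) * (1 - s / ((n : ℝ) + 1)) * ((n : ℝ) + 1) ^ s :=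
            mul_le_mul_of_nonneg_right hineq hpow.le
        _ ≤ (4 * a + n) * ((n : ℝ) + 1) * (((n : ℝ) / ((n : ℝ) + 1)) ^ s) * ((n : ℝ) + 1) ^ s := by
            have := mul_le_mul_of_nonneg_left (bern n)
              (by positivity : (0:ℝ) ≤ (4 * a + (n:ℝ)) * ((n : ℝ) + 1))
            exact mul_le_mul_of_nonneg_right (by linarith [this]) hpow.le
        _ = (4 * a + n) * ((n : ℝ) + 1) * (((n : ℝ) / ((n : ℝ) + 1)) ^ s * ((n : ℝ) + 1) ^ s) := by
            ring
    -- combine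
    have hden : (0:ℝ) < (4 * a + n) * ((n : ℝ) + 1) := by positivity
    have hcomb : u (n + 1) * ((4 * a + n) * ((n : ℝ) + 1)) ≤ u n * ((4 * a + n) * ((n : ℝ) + 1)) := by
      have e1 : u (n + 1) * ((4 * a + n) * ((n : ℝ) + 1)) =
          |b n| * ((2 * a + n) * (1 - 2 * a + n)) * ((n : ℝ) + 1) ^ s := by
        rw [hu_def]
        push_cast
        rw [← key2]
        ring
      have e2 : |b n| * ((2 * a + n) * (1 - 2 * a + n)) * ((n : ℝ) + 1) ^ s ≤
          |b n| * ((4 * a + n) * ((n : ℝ) + 1) * (n : ℝ) ^ s) := by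
        calc |b n| * ((2 * a + n) * (1 - 2 * a + n)) * ((n : ℝ) + 1) ^ s
            = |b n| * ((2 * a + n) * (1 - 2 * a + n) * ((n : ℝ) + 1) ^ s) := by ring
          _ ≤ |b n| * ((4 * a + n) * ((n : ℝ) + 1) * (n : ℝ) ^ s) :=
              mul_le_mul_of_nonneg_left poly (abs_nonneg _)
      rw [e1]
      calc |b n| * ((2 * a + n) * (1 - 2 * a + n)) * ((n : ℝ) + 1) ^ s
          ≤ |b n| * ((4 * a + n) * ((n : ℝ) + 1) * (n : ℝ) ^ s) := e2
        _ = u n * ((4 * a + n) * ((n : ℝ) + 1)) := by rw [hu_def]; ring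
    exact le_of_mul_le_mul_right hcomb hden
  -- hence u n ≤ u N for n ≥ N
  have humon : ∀ n : ℕ, N ≤ n → u n ≤ u N := by
    intro n hn
    induction n, hn using Nat.le_induction with
    | base => exact le_refl _
    | succ n hn ih => exact le_trans (hstep n hn) ih
  -- conclude
  have hNpos : 0 < N := by
    by_contra h
    push_neg at h
    interval_cases N
    · simp at hNa; linarith
  have hbound : ∀ n : ℕ, N ≤ n → (n : ℝ) * |b n| ≤ u N * (n : ℝ) ^ (1 - s) := by
    intro n hn
    have hn0 : (0:ℝ) < (n : ℝ) := by
      have : (N:ℝ) ≤ (n:ℝ) := by exact_mod_cast hn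
      have : (0:ℝ) < (N:ℝ) := by exact_mod_cast hNpos
      linarith [(by exact_mod_cast hn : (N:ℝ) ≤ (n:ℝ))]
    have e : (n : ℝ) * |b n| = u n * (n : ℝ) ^ (1 - s) := by
      rw [hu_def]
      have : (n : ℝ) ^ s * (n : ℝ) ^ (1 - s) = (n : ℝ) := by
        rw [← Real.rpow_add hn0]
        simp
      calc (n : ℝ) * |b n| = |b n| * ((n : ℝ) ^ s * (n : ℝ) ^ (1 - s)) := by rw [this]; ring
        _ = |b n| * (n : ℝ) ^ s * (n : ℝ) ^ (1 - s) := by ring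
    rw [e]
    exact mul_le_mul_of_nonneg_right (humon n hn)
      (Real.rpow_nonneg hn0.le _)
  have hg : Tendsto (fun n : ℕ => u N * (n : ℝ) ^ (1 - s)) atTop (nhds 0) := by
    have h1 : Tendsto (fun x : ℝ => x ^ (-(s - 1))) atTop (nhds 0) :=
      tendsto_rpow_neg_atTop (by linarith)
    have h2 := (h1.comp (tendsto_natCast_atTop_atTop (R := ℝ))).const_mul (u N)
    simpa [mul_zero, Function.comp, show -(s-1) = 1 - s by ring] using h2
  apply squeeze_zero' (Eventually.of_forall fun n => mul_nonneg (Nat.cast_nonneg n) (abs_nonneg _))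
    _ hg
  filter_upwards [eventually_ge_atTop N] with n hn
  exact hbound n hn


/-- Derivative bounds for the hypergeometric function `F(x) = Σ b_n xⁿ` with
`b_n = (2a)_n (1-2a)_n / ((4a)_n n!)`, `a > 1/4`: `F` is infinitely differentiable on
`(-1,1)`, `(1-x) F'(x) → 0` and `(1-x)² F''(x) → 0` as `x → 1⁻`, and in particular
`(1-x)|F'(x)|` and `(1-x)²|F''(x)|` are uniformly bounded on `[0,1)`. -/
theorem hypergeometric_derivative_bounds
    (a : ℝ) (ha : 1 / 4 < a)
    (h4a : ∀ k : ℕ, 4 * a ≠ -(k : ℝ))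
    (b : ℕ → ℝ)
    (hb : ∀ n : ℕ, b n =
      ((ascPochhammer ℝ n).eval (2 * a) * (ascPochhammer ℝ n).eval (1 - 2 * a)) /
        ((ascPochhammer ℝ n).eval (4 * a) * (n ! : ℝ)))
    (F : ℝ → ℝ) (hF : ∀ x : ℝ, F x = ∑' n : ℕ, b n * x ^ n) :
    ContDiffOn ℝ (⊤ : ℕ∞) F (Set.Ioo (-1 : ℝ) 1) ∧
      Tendsto (fun x : ℝ => (1 - x) * deriv F x) (nhdsWithin 1 (Set.Iio 1)) (nhds 0) ∧
      Tendsto (fun x : ℝ => (1 - x) ^ 2 * deriv (deriv F) x)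
        (nhdsWithin 1 (Set.Iio 1)) (nhds 0) ∧
      ∃ M : ℝ, ∀ x ∈ Set.Ico (0 : ℝ) 1,
        (1 - x) * |deriv F x| ≤ M ∧ (1 - x) ^ 2 * |deriv (deriv F) x| ≤ M := by
  have htb : Tendsto (fun n : ℕ => (n : ℝ) * |b n|) atTop (nhds 0) := coeff_decay a ha b hb
  obtain ⟨K0, hK0mem⟩ := htb.bddAbove_range
  have hK0 : ∀ n : ℕ, (n : ℝ) * |b n| ≤ K0 := fun n => hK0mem ⟨n, rfl⟩
  have hK00 : 0 ≤ K0 := le_trans (by simp) (hK0 0)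
  set b1 : ℕ → ℝ := fun n => ((n : ℝ) + 1) * b (n + 1) with hb1_def
  set b2 : ℕ → ℝ := fun n => ((n : ℝ) + 1) * b1 (n + 1) with hb2_def
  have hb1abs : ∀ n : ℕ, |b1 n| = ((n : ℝ) + 1) * |b (n + 1)| := fun n => by
    rw [hb1_def, abs_mul, abs_of_nonneg (by positivity : (0:ℝ) ≤ (n : ℝ) + 1)]
  have hb2abs : ∀ n : ℕ, |b2 n| = ((n : ℝ) + 1) * |b1 (n + 1)| := fun n => by
    rw [hb2_def, abs_mul, abs_of_nonneg (by positivity : (0:ℝ) ≤ (n : ℝ) + 1)]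
  have hb1K : ∀ n : ℕ, |b1 n| ≤ K0 := by
    intro n
    rw [hb1abs]
    have := hK0 (n + 1)
    push_cast at this
    linarith
  have hb1K' : ∀ n : ℕ, |b1 n| ≤ K0 * ((n : ℝ) + 1) := by
    intro n
    have := hb1K n
    nlinarith [Nat.cast_nonneg (α := ℝ) n]
  have hb2K : ∀ n : ℕ, |b2 n| ≤ K0 * ((n : ℝ) + 1) := by
    intro n
    rw [hb2abs]
    have := hb1K (n + 1)
    have h2 : (0:ℝ) < (n : ℝ) + 1 := by positivity
    nlinarith
  have hbK : ∀ n : ℕ, |b n| ≤ (|b 0| + K0) * ((n : ℝ) + 1) := by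
    intro n
    rcases n with _ | m
    · simp
      nlinarith [abs_nonneg (b 0)]
    · have h1 := hK0 (m + 1)
      have h2 : (1:ℝ) ≤ ((m + 1 : ℕ) : ℝ) := by exact_mod_cast Nat.one_le_iff_ne_zero.2 (by simp)
      have h3 : (0:ℝ) ≤ ((m + 1 : ℕ) : ℝ) + 1 := by positivity
      have h4 : |b (m + 1)| ≤ K0 := by nlinarith [abs_nonneg (b (m + 1))]
      nlinarith [abs_nonneg (b 0), abs_nonneg (b (m + 1))]
  have hFeq : F = fun y : ℝ => ∑' n : ℕ, b n * y ^ n := funext hF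
  -- first derivative
  have hd1 : ∀ x : ℝ, |x| < 1 → deriv F x = ∑' n : ℕ, b1 n * x ^ n := by
    intro x hx
    rw [hFeq]
    exact ((psum_deriv b (|b 0| + K0) hbK hx).tsum_eq).symm
  -- second derivative
  have hd2 : ∀ x : ℝ, |x| < 1 →
      deriv (fun y : ℝ => ∑' n : ℕ, b1 n * y ^ n) x = ∑' n : ℕ, b2 n * x ^ n := by
    intro x hx
    exact ((psum_deriv b1 K0 hb1K' hx).tsum_eq).symm
  have hd2' : ∀ x : ℝ, |x| < 1 → deriv (deriv F) x = ∑' n : ℕ, b2 n * x ^ n := by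
    intro x hx
    have hopen : Metric.ball (0:ℝ) 1 ∈ nhds x :=
      (Metric.isOpen_ball).mem_nhds (by rwa [Metric.mem_ball, Real.dist_eq, sub_zero])
    have hev : deriv F =ᶠ[nhds x] (fun y : ℝ => ∑' n : ℕ, b1 n * y ^ n) := by
      filter_upwards [hopen] with y hy
      rw [Metric.mem_ball, Real.dist_eq, sub_zero] at hy
      exact hd1 y hy
    rw [hev.deriv_eq]
    exact hd2 x hx
  -- the tendsto facts for the absolute coefficient series
  have hb1tend : Tendsto (fun n : ℕ => |b1 n|) atTop (nhds 0) := by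
    have h := htb.comp (tendsto_add_atTop_nat 1)
    exact h.congr fun n => by
      simp only [Function.comp_apply]
      rw [hb1abs n]
      push_cast
      ring
  have hb2tend : Tendsto (fun n : ℕ => |b2 n| / ((n : ℝ) + 1)) atTop (nhds 0) := by
    have h := hb1tend.comp (tendsto_add_atTop_nat 1)
    exact h.congr fun n => by
      simp only [Function.comp_apply]
      rw [hb2abs n]
      field_simp
  have ht1 := tendsto_one (fun n => abs_nonneg (b1 n)) hb1tend
  have ht2 := tendsto_two (fun n => abs_nonneg (b2 n)) hb2tend
  -- pointwise absolute-value comparison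
  have habs1 : ∀ x : ℝ, 0 ≤ x → x < 1 →
      |∑' n : ℕ, b1 n * x ^ n| ≤ ∑' n : ℕ, |b1 n| * x ^ n := by
    intro x hx0 hx1
    have hnorm : ∀ n : ℕ, ‖b1 n * x ^ n‖ = |b1 n| * x ^ n := by
      intro n
      rw [norm_mul, norm_pow, Real.norm_eq_abs, Real.norm_eq_abs, abs_of_nonneg hx0]
    have hs : Summable fun n : ℕ => ‖b1 n * x ^ n‖ := by
      apply Summable.congr (summable_of_le_weight (fun n => abs_nonneg (b1 n)) hb1K' hx0 hx1)
      intro n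
      exact (hnorm n).symm
    have h := norm_tsum_le_tsum_norm hs
    rw [Real.norm_eq_abs] at h
    calc |∑' n : ℕ, b1 n * x ^ n| ≤ ∑' n : ℕ, ‖b1 n * x ^ n‖ := h
      _ = ∑' n : ℕ, |b1 n| * x ^ n := tsum_congr hnorm
  have habs2 : ∀ x : ℝ, 0 ≤ x → x < 1 →
      |∑' n : ℕ, b2 n * x ^ n| ≤ ∑' n : ℕ, |b2 n| * x ^ n := by
    intro x hx0 hx1
    have hnorm : ∀ n : ℕ, ‖b2 n * x ^ n‖ = |b2 n| * x ^ n := by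
      intro n
      rw [norm_mul, norm_pow, Real.norm_eq_abs, Real.norm_eq_abs, abs_of_nonneg hx0]
    have hs : Summable fun n : ℕ => ‖b2 n * x ^ n‖ := by
      apply Summable.congr (summable_of_le_weight (fun n => abs_nonneg (b2 n)) hb2K hx0 hx1)
      intro n
      exact (hnorm n).symm
    have h := norm_tsum_le_tsum_norm hs
    rw [Real.norm_eq_abs] at h
    calc |∑' n : ℕ, b2 n * x ^ n| ≤ ∑' n : ℕ, ‖b2 n * x ^ n‖ := h
      _ = ∑' n : ℕ, |b2 n| * x ^ n := tsum_congr hnorm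
  refine ⟨?_, ?_, ?_, ?_⟩
  · -- smoothness
    have hanal : AnalyticOnNhd ℝ F (Set.Ioo (-1 : ℝ) 1) := by
      intro y hy
      rw [hFeq]
      apply (psum_hasFPowerSeries b (|b 0| + K0) hbK).analyticAt_of_mem
      rw [EMetric.mem_ball, edist_dist, Real.dist_eq, sub_zero]
      exact_mod_cast ENNReal.ofReal_lt_one.2 (abs_lt.2 ⟨hy.1, hy.2⟩)
    exact hanal.contDiffOn isOpen_Ioo.uniqueDiffOn
  · -- first limit
    apply squeeze_zero_norm' _ ht1
    filter_upwards [Ioo_mem_nhdsLT_of_mem (show (1:ℝ) ∈ Set.Ioc 0 1 by constructor <;> norm_num)]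
      with x hx
    have hx0 : (0:ℝ) ≤ x := hx.1.le
    have hx1 : x < 1 := hx.2
    have hxa : |x| < 1 := abs_lt.2 ⟨by linarith, hx1⟩
    rw [hd1 x hxa, Real.norm_eq_abs, abs_mul, abs_of_nonneg (by linarith : (0:ℝ) ≤ 1 - x)]
    exact mul_le_mul_of_nonneg_left (habs1 x hx0 hx1) (by linarith)
  · -- second limit
    apply squeeze_zero_norm' _ ht2
    filter_upwards [Ioo_mem_nhdsLT_of_mem (show (1:ℝ) ∈ Set.Ioc 0 1 by constructor <;> norm_num)]
      with x hx
    have hx0 : (0:ℝ) ≤ x := hx.1.le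
    have hx1 : x < 1 := hx.2
    have hxa : |x| < 1 := abs_lt.2 ⟨by linarith, hx1⟩
    rw [hd2' x hxa, Real.norm_eq_abs, abs_mul, abs_of_nonneg (by positivity : (0:ℝ) ≤ (1 - x) ^ 2)]
    exact mul_le_mul_of_nonneg_left (habs2 x hx0 hx1) (by positivity)
  · -- uniform bounds
    refine ⟨K0, fun x hx => ?_⟩
    obtain ⟨hx0, hx1⟩ := hx
    have hxa : |x| < 1 := abs_lt.2 ⟨by linarith, hx1⟩
    have h1x : (0:ℝ) ≤ 1 - x := by linarith
    constructor
    · rw [hd1 x hxa]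
      calc (1 - x) * |∑' n : ℕ, b1 n * x ^ n|
          ≤ (1 - x) * ∑' n : ℕ, |b1 n| * x ^ n :=
            mul_le_mul_of_nonneg_left (habs1 x hx0 hx1) h1x
        _ ≤ K0 := bound_one (fun n => abs_nonneg (b1 n)) hb1K hx0 hx1
    · rw [hd2' x hxa]
      calc (1 - x) ^ 2 * |∑' n : ℕ, b2 n * x ^ n|
          ≤ (1 - x) ^ 2 * ∑' n : ℕ, |b2 n| * x ^ n :=
            mul_le_mul_of_nonneg_left (habs2 x hx0 hx1) (by positivity)
        _ ≤ K0 := bound_two (fun n => abs_nonneg (b2 n)) hb2K hx0 hx1
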